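/- Bound on the total size of a characteristic sample: every minimal Moore machine M = (I,O,Q,q0,δ,λ) with nonempty input alphabet I admits a characteristic sample S_IO with at most (|Q|·|I| + 1)·(|Q| + 1) traces in which moreover every input word has length at most |Q| + 1 + |Q|²; consequently the sum of the lengths of the input words of S_IO is at most (|Q|·|I| + 1)·(|Q| + 1)·(|Q| + 1 + |Q|²), i.e., O(|Q|⁴·|I|). -/

import Mathlib

/-- A (complete, deterministic) Moore machine with input alphabet `I`,
output alphabet `O`, state set `Q`, initial state `init`, total transition
function `trans` and total output function `out`. -/
structure Moore (I O Q : Type) where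
  init : Q
  trans : Q → I → Q
  out : Q → O

namespace Moore

variable {I O Q : Type}

/-- Extended transition function: `δ*(q,ε)=q` and `δ*(q,w·a)=δ(δ*(q,w),a)`. -/
def deltaStar (M : Moore I O Q) (q : Q) (w : List I) : Q :=
  w.foldl M.trans q

/-- Extended output function: `λ*(q,w)` lists the output `λ(δ*(q,u))` for
every prefix `u` of `w` in order; this satisfies `λ*(q,ε)=λ(q)` and
`λ*(q,w·a)=λ*(q,w)·λ(δ*(q,w·a))`. -/
def lambdaStar (M : Moore I O Q) (q : Q) (w : List I) : List O :=
  w.inits.map fun u => M.out (M.deltaStar q u)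

/-- Two Moore machines over the same alphabets are equivalent iff they produce
the same output word on every input word. -/
def Equivalent {Q' : Type} (M : Moore I O Q) (M' : Moore I O Q') : Prop :=
  ∀ w : List I, M.lambdaStar M.init w = M'.lambdaStar M'.init w

/-- `M` is minimal iff every Moore machine equivalent to `M` has at least as
many states. -/
def Minimal [Fintype Q] (M : Moore I O Q) : Prop :=
  ∀ (Q' : Type) [Fintype Q'] (M' : Moore I O Q'),
    M.Equivalent M' → Fintype.card Q ≤ Fintype.card Q'

end Moore

/-- Shortlex ("length then lexicographic") strict order on words. -/
def ShortlexLt {I : Type} [LinearOrder I] (w w' : List I) : Prop :=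
  w.length < w'.length ∨ (w.length = w'.length ∧ List.Lex (· < ·) w w')

/-- `w` is the shortlex-least element of the set `S` of words. -/
def IsShortlexLeast {I : Type} [LinearOrder I] (S : Set (List I)) (w : List I) : Prop :=
  w ∈ S ∧ ∀ v ∈ S, w = v ∨ ShortlexLt w v

/-- The set of all prefixes of words in `S`. -/
def wordPrefixes {I : Type} (S : Set (List I)) : Set (List I) :=
  {u | ∃ w ∈ S, u <+: w}

namespace Moore

variable {I O Q : Type}

/-- `SP` is the shortest-prefix map of `M`: for every state `q`, `SP q` is the
shortlex-least word reaching `q` from the initial state. -/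
def IsShortestPrefixMap [LinearOrder I] (M : Moore I O Q) (SP : Q → List I) : Prop :=
  ∀ q : Q, IsShortlexLeast {w | M.deltaStar M.init w = q} (SP q)

/-- The nucleus `N_L(M)`: the empty word together with all one-letter
extensions of shortest prefixes. -/
def nucleus (_M : Moore I O Q) (SP : Q → List I) : Set (List I) :=
  {[]} ∪ {w | ∃ q : Q, ∃ a : I, w = SP q ++ [a]}

/-- `MD` is a minimum-distinguishing-suffix map of `M`: for all distinct
states `qu qv`, `MD qu qv` is the shortlex-least word on which the outputs
from `qu` and from `qv` differ. -/
def IsMinDistSuffixMap [LinearOrder I] (M : Moore I O Q) (MD : Q → Q → List I) : Prop :=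
  ∀ qu qv : Q, qu ≠ qv →
    IsShortlexLeast {w | M.lambdaStar qu w ≠ M.lambdaStar qv w} (MD qu qv)

/-- `M` is consistent with the Moore `(I,O)`-trace `t = (ρI, ρO)` iff running
`M` on `ρI` from the initial state produces `ρO`. -/
def ConsistentTrace (M : Moore I O Q) (t : List I × List O) : Prop :=
  M.lambdaStar M.init t.1 = t.2

/-- `S` is a characteristic sample for `M` (with shortest-prefix map `SP` and
minimum-distinguishing-suffix map `MD`):
(1) the nucleus is contained in the prefixes of the input words of `S`, and
(2) for all `u ∈ S_P(M)` and `v ∈ N_L(M)` reaching different states, both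
`u·w` and `v·w` are prefixes of input words of `S`, where `w` is the minimum
distinguishing suffix of the two states. -/
def CharSample [LinearOrder I] (M : Moore I O Q) (SP : Q → List I)
    (MD : Q → Q → List I) (S : Set (List I × List O)) : Prop :=
  M.nucleus SP ⊆ wordPrefixes (Prod.fst '' S) ∧
  ∀ u ∈ Set.range SP, ∀ v ∈ M.nucleus SP,
    M.deltaStar M.init u ≠ M.deltaStar M.init v →
      u ++ MD (M.deltaStar M.init u) (M.deltaStar M.init v) ∈ wordPrefixes (Prod.fst '' S) ∧
      v ++ MD (M.deltaStar M.init u) (M.deltaStar M.init v) ∈ wordPrefixes (Prod.fst '' S)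

end Moore

/-!
The sample consists of the nucleus words `v` together with the words `v ++ MD q (δ* q₀ v)` for
the states `q ≠ δ* q₀ v`; this gives at most `|Q|·|I| + 1` nucleus words, each contributing at
most `|Q| + 1` words. Shortest prefixes are prefix-closed, so `S_P(M) ⊆ N_L(M)`, and `MD` is
symmetric, so the words `u ++ MD (δ* q₀ u) (δ* q₀ v)` with `u ∈ S_P(M)` are already of this
form. The length bound comes from pumping: a shortlex-least word reaching a state visits no
state twice, so it has length `< |Q|`, and a shortlex-least distinguishing word visits no pair
of states twice, since deleting the loop keeps the final pair and hence the differing last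
output, so it has length `< |Q|²`.
-/

theorem List.exists_length_lt_foldl_eq {α σ : Type*} [Fintype σ] (f : σ → α → σ) (s : σ)
    {w : List α} (hw : Fintype.card σ ≤ w.length) :
    ∃ w' : List α, w'.length < w.length ∧ w'.foldl f s = w.foldl f s := by
  obtain ⟨x, y, hxy, he⟩ := Fintype.exists_ne_map_eq_of_card_lt
    (fun i : Fin (w.length + 1) => (w.take i).foldl f s) (by simp; omega)
  wlog hlt : (x : ℕ) < y generalizing x y
  · exact this y x hxy.symm he.symm (by omega)
  refine ⟨w.take x ++ w.drop y, by simp; omega, ?_⟩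
  conv_rhs => rw [← List.take_append_drop y w]
  simp only [List.foldl_append] at he ⊢
  rw [he]

theorem List.foldl_pair {α σ τ : Type*} (f : σ → α → σ) (g : τ → α → τ) (w : List α)
    (s : σ) (t : τ) :
    w.foldl (fun p a => (f p.1 a, g p.2 a)) (s, t) = (w.foldl f s, w.foldl g t) := by
  induction w generalizing s t with
  | nil => rfl
  | cons a w ih => exact ih _ _

theorem List.Lex.append_of_length_eq {α : Type*} {r : α → α → Prop} {w v : List α}
    (hl : w.length = v.length) (hx : List.Lex r w v) (s t : List α) :
    List.Lex r (w ++ s) (v ++ t) := by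
  induction hx with
  | nil => simp at hl
  | cons _ ih => exact .cons (ih (by simpa using hl))
  | rel h => exact .rel h

namespace Moore

variable {I O Q : Type} (M : Moore I O Q)

theorem deltaStar_append (q : Q) (u v : List I) :
    M.deltaStar q (u ++ v) = M.deltaStar (M.deltaStar q u) v :=
  List.foldl_append ..

theorem lambdaStar_append_singleton (q : Q) (w : List I) (a : I) :
    M.lambdaStar q (w ++ [a]) = M.lambdaStar q w ++ [M.out (M.deltaStar q (w ++ [a]))] := by
  simp [lambdaStar, List.inits_append]

theorem getLast?_lambdaStar (q : Q) (w : List I) :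
    (M.lambdaStar q w).getLast? = some (M.out (M.deltaStar q w)) := by
  rcases List.eq_nil_or_concat' w with rfl | ⟨w, a, rfl⟩
  · rfl
  · simp [lambdaStar_append_singleton]

theorem lambdaStar_ne_of_out_ne {qu qv : Q} {w : List I}
    (h : M.out (M.deltaStar qu w) ≠ M.out (M.deltaStar qv w)) :
    M.lambdaStar qu w ≠ M.lambdaStar qv w := fun he => by
  simpa [getLast?_lambdaStar, h] using congrArg List.getLast? he

end Moore

section Shortlex

variable {I : Type} [LinearOrder I]

theorem shortlexLt_asymm {w v : List I} (h : ShortlexLt w v) : ¬ ShortlexLt v w := by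
  rcases h with h | ⟨hl, hx⟩ <;> rintro (h' | ⟨hl', hx'⟩)
  all_goals first | omega | exact List.lex_asymm (fun h₁ h₂ => lt_asymm h₁ h₂) hx hx'

theorem shortlexLt_append_singleton {w v : List I} (h : ShortlexLt w v) (a : I) :
    ShortlexLt (w ++ [a]) (v ++ [a]) := by
  rcases h with h | ⟨hl, hx⟩
  · left; simpa using h
  · exact .inr ⟨by simp [hl], hx.append_of_length_eq hl [a] [a]⟩

theorem IsShortlexLeast.length_le {S : Set (List I)} {w v : List I}
    (h : IsShortlexLeast S w) (hv : v ∈ S) : w.length ≤ v.length := by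
  rcases h.2 v hv with rfl | hlt | ⟨hl, -⟩ <;> omega

theorem IsShortlexLeast.unique {S : Set (List I)} {w w' : List I}
    (h : IsShortlexLeast S w) (h' : IsShortlexLeast S w') : w = w' := by
  rcases h.2 w' h'.1 with he | hlt
  · exact he
  · rcases h'.2 w h.1 with he | hlt'
    · exact he.symm
    · exact absurd hlt' (shortlexLt_asymm hlt)

end Shortlex

namespace Moore

variable {I O Q : Type} [LinearOrder I] (M : Moore I O Q)

theorem length_lt_card_of_isShortlexLeast_reach [Fintype Q] {p q : Q} {w : List I}
    (h : IsShortlexLeast {w | M.deltaStar p w = q} w) : w.length < Fintype.card Q := by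
  by_contra! hw
  obtain ⟨w', hlt, he⟩ := List.exists_length_lt_foldl_eq M.trans p hw
  have := h.length_le (show M.deltaStar p w' = q from he.trans h.1)
  omega

theorem out_ne_of_isShortlexLeast_dist {qu qv : Q} {w : List I}
    (h : IsShortlexLeast {w | M.lambdaStar qu w ≠ M.lambdaStar qv w} w) :
    M.out (M.deltaStar qu w) ≠ M.out (M.deltaStar qv w) := by
  rcases List.eq_nil_or_concat' w with rfl | ⟨w, a, rfl⟩
  · simpa [lambdaStar, deltaStar] using h.1
  · intro hout
    have hw : M.lambdaStar qu w ≠ M.lambdaStar qv w := fun he =>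
      h.1 (by rw [lambdaStar_append_singleton, lambdaStar_append_singleton, he, hout])
    have := h.length_le hw
    simp at this

theorem length_lt_card_sq_of_isShortlexLeast_dist [Fintype Q] {qu qv : Q} {w : List I}
    (h : IsShortlexLeast {w | M.lambdaStar qu w ≠ M.lambdaStar qv w} w) :
    w.length < Fintype.card Q ^ 2 := by
  by_contra! hw
  obtain ⟨w', hlt, he⟩ := List.exists_length_lt_foldl_eq
    (fun p a => (M.trans p.1 a, M.trans p.2 a)) (qu, qv)
    (w := w) (by rwa [Fintype.card_prod, ← sq])
  simp only [List.foldl_pair, Prod.mk.injEq] at he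
  have hw' : M.lambdaStar qu w' ≠ M.lambdaStar qv w' := by
    apply lambdaStar_ne_of_out_ne
    simpa only [deltaStar, he] using M.out_ne_of_isShortlexLeast_dist h
  have := h.length_le hw'
  omega

variable {M}

theorem IsShortestPrefixMap.length_lt_card [Fintype Q] {SP : Q → List I}
    (hSP : M.IsShortestPrefixMap SP) (q : Q) : (SP q).length < Fintype.card Q :=
  M.length_lt_card_of_isShortlexLeast_reach (hSP q)

/-- If `SP q = w ++ [a]` then `w = SP (δ* q₀ w)`, for otherwise `SP (δ* q₀ w) ++ [a]` would be
a shortlex-smaller word reaching `q`. -/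
theorem IsShortestPrefixMap.mem_nucleus {SP : Q → List I} (hSP : M.IsShortestPrefixMap SP)
    (q : Q) : SP q ∈ M.nucleus SP := by
  rcases List.eq_nil_or_concat' (SP q) with h | ⟨w, a, h⟩
  · exact .inl h
  set p := M.deltaStar M.init w
  refine .inr ⟨p, a, ?_⟩
  rcases (hSP p).2 w rfl with hw | hlt
  · rw [h, hw]
  · have hreach : M.deltaStar M.init (SP p ++ [a]) = q := by
      rw [deltaStar_append, (hSP p).1, ← deltaStar_append, ← h, (hSP q).1]
    have hlt' : ShortlexLt (SP p ++ [a]) (SP q) := h ▸ shortlexLt_append_singleton hlt a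
    rcases (hSP q).2 _ hreach with he | hgt
    · exact he
    · exact absurd hlt' (shortlexLt_asymm hgt)

theorem IsMinDistSuffixMap.symm {MD : Q → Q → List I} (hMD : M.IsMinDistSuffixMap MD)
    {qu qv : Q} (h : qu ≠ qv) : MD qu qv = MD qv qu := by
  refine (hMD qu qv h).unique ?_
  simpa only [ne_comm (a := M.lambdaStar qv _)] using hMD qv qu h.symm

theorem IsMinDistSuffixMap.length_lt_card_sq [Fintype Q] {MD : Q → Q → List I}
    (hMD : M.IsMinDistSuffixMap MD) {qu qv : Q} (h : qu ≠ qv) :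
    (MD qu qv).length < Fintype.card Q ^ 2 :=
  M.length_lt_card_sq_of_isShortlexLeast_dist (hMD qu qv h)

end Moore

theorem subset_wordPrefixes {I : Type} (S : Set (List I)) : S ⊆ wordPrefixes S :=
  fun w hw => ⟨w, hw, List.prefix_refl w⟩

namespace Moore

variable {I O Q : Type} [LinearOrder I] [Fintype I] [Fintype Q]

def nucleusFinset (SP : Q → List I) : Finset (List I) :=
  insert [] (Finset.univ.image fun p : Q × I => SP p.1 ++ [p.2])

theorem coe_nucleusFinset (M : Moore I O Q) (SP : Q → List I) :
    (nucleusFinset SP : Set (List I)) = M.nucleus SP := by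
  ext w
  simp only [nucleusFinset, nucleus, Finset.coe_insert, Finset.coe_image, Set.mem_insert_iff,
    Set.mem_image, Finset.mem_coe, Finset.mem_univ, true_and, Prod.exists, Set.mem_union,
    Set.mem_singleton_iff, Set.mem_ofPred_eq]
  exact or_congr_right (exists₂_congr fun _ _ => eq_comm)

theorem card_nucleusFinset_le (SP : Q → List I) :
    (nucleusFinset SP).card ≤ Fintype.card Q * Fintype.card I + 1 := by
  refine (Finset.card_insert_le _ _).trans (Nat.add_le_add_right ?_ 1)
  exact Finset.card_image_le.trans (by simp)

theorem length_le_card_of_mem_nucleusFinset {M : Moore I O Q}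
    {SP : Q → List I} (hSP : M.IsShortestPrefixMap SP) {v : List I}
    (hv : v ∈ nucleusFinset SP) : v.length ≤ Fintype.card Q := by
  simp only [nucleusFinset, Finset.mem_insert, Finset.mem_image, Finset.mem_univ, true_and] at hv
  rcases hv with rfl | ⟨⟨q, a⟩, rfl⟩
  · simp
  · simpa using hSP.length_lt_card q

def sampleWords [DecidableEq Q] (M : Moore I O Q) (SP : Q → List I) (MD : Q → Q → List I) :
    Finset (List I) :=
  (nucleusFinset SP).biUnion fun v =>
    insert v ((Finset.univ.erase (M.deltaStar M.init v)).image
      fun q => v ++ MD q (M.deltaStar M.init v))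

variable [DecidableEq Q] {M : Moore I O Q} {SP : Q → List I} {MD : Q → Q → List I}

theorem mem_sampleWords_of_mem_nucleus {v : List I} (hv : v ∈ M.nucleus SP) :
    v ∈ M.sampleWords SP MD :=
  Finset.mem_biUnion.2 ⟨v, by rwa [← Finset.mem_coe, M.coe_nucleusFinset], by simp⟩

theorem append_mem_sampleWords {v : List I} (hv : v ∈ M.nucleus SP) {q : Q}
    (hq : q ≠ M.deltaStar M.init v) : v ++ MD q (M.deltaStar M.init v) ∈ M.sampleWords SP MD :=
  Finset.mem_biUnion.2 ⟨v, by rwa [← Finset.mem_coe, M.coe_nucleusFinset],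
    Finset.mem_insert_of_mem (Finset.mem_image_of_mem _ (Finset.mem_erase.2 ⟨hq, by simp⟩))⟩

theorem length_le_of_mem_sampleWords (hSP : M.IsShortestPrefixMap SP)
    (hMD : M.IsMinDistSuffixMap MD) {w : List I} (hw : w ∈ M.sampleWords SP MD) :
    w.length ≤ Fintype.card Q + Fintype.card Q ^ 2 := by
  obtain ⟨v, hv, hw⟩ := Finset.mem_biUnion.1 hw
  have hvlen := length_le_card_of_mem_nucleusFinset hSP hv
  rcases Finset.mem_insert.1 hw with rfl | hw
  · omega
  · obtain ⟨q, hq, rfl⟩ := Finset.mem_image.1 hw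
    have := hMD.length_lt_card_sq (Finset.mem_erase.1 hq).1
    rw [List.length_append]
    omega

theorem charSample_of_sampleWords_subset (hSP : M.IsShortestPrefixMap SP)
    (hMD : M.IsMinDistSuffixMap MD) {S : Set (List I × List O)}
    (hS : ↑(M.sampleWords SP MD) ⊆ Prod.fst '' S) : M.CharSample SP MD S := by
  have hpre := hS.trans (subset_wordPrefixes _)
  refine ⟨fun v hv => hpre (mem_sampleWords_of_mem_nucleus hv), ?_⟩
  rintro _ ⟨q, rfl⟩ v hv hne
  rw [(hSP q).1] at hne ⊢
  refine ⟨?_, hpre (append_mem_sampleWords hv hne)⟩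
  have hq := append_mem_sampleWords (MD := MD) (hSP.mem_nucleus q)
    (q := M.deltaStar M.init v) (by rwa [(hSP q).1, ne_comm])
  rw [(hSP q).1, ← hMD.symm hne] at hq
  exact hpre hq

variable (M SP MD) in
def sample : Finset (List I × List O) :=
  (M.sampleWords SP MD).map
    ⟨fun w => (w, M.lambdaStar M.init w), fun _ _ h => congrArg Prod.fst h⟩

theorem card_sample_le :
    (M.sample SP MD).card ≤ (Fintype.card Q * Fintype.card I + 1) * (Fintype.card Q + 1) := by
  rw [sample, Finset.card_map]
  refine (Finset.card_biUnion_le_card_mul _ _ _ fun v _ => ?_).trans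
    (Nat.mul_le_mul_right _ (card_nucleusFinset_le SP))
  refine (Finset.card_insert_le _ _).trans (Nat.add_le_add_right ?_ 1)
  exact Finset.card_image_le.trans (Finset.card_erase_le.trans (by simp))

theorem consistentTrace_of_mem_sample {t : List I × List O} (ht : t ∈ M.sample SP MD) :
    M.ConsistentTrace t := by
  obtain ⟨_, -, rfl⟩ := Finset.mem_map.1 ht
  rfl

theorem sampleWords_subset_image_fst_sample :
    ↑(M.sampleWords SP MD) ⊆ Prod.fst '' (M.sample SP MD : Set (List I × List O)) :=
  fun _ hw => ⟨_, Finset.mem_map_of_mem _ hw, rfl⟩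

end Moore

theorem exists_small_total_characteristic_sample_general {I O Q : Type} [LinearOrder I]
    [Fintype I] [Fintype Q]
    (M : Moore I O Q)
    (SP : Q → List I) (hSP : M.IsShortestPrefixMap SP)
    (MD : Q → Q → List I) (hMD : M.IsMinDistSuffixMap MD) :
    ∃ S : Finset (List I × List O),
      (∀ t ∈ S, M.ConsistentTrace t) ∧
      M.CharSample SP MD ↑S ∧
      S.card ≤ (Fintype.card Q * Fintype.card I + 1) * (Fintype.card Q + 1) ∧
      (∀ t ∈ S, t.1.length ≤ Fintype.card Q + 1 + Fintype.card Q ^ 2) ∧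
      ∑ t ∈ S, t.1.length ≤
        (Fintype.card Q * Fintype.card I + 1) * (Fintype.card Q + 1) *
          (Fintype.card Q + 1 + Fintype.card Q ^ 2) := by
  classical
  have hlen : ∀ t ∈ M.sample SP MD, t.1.length ≤ Fintype.card Q + 1 + Fintype.card Q ^ 2 := by
    intro t ht
    obtain ⟨w, hw, rfl⟩ := Finset.mem_map.1 ht
    exact (Moore.length_le_of_mem_sampleWords hSP hMD hw).trans (by omega)
  refine ⟨M.sample SP MD, fun _ => Moore.consistentTrace_of_mem_sample,
    Moore.charSample_of_sampleWords_subset hSP hMD Moore.sampleWords_subset_image_fst_sample,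
    Moore.card_sample_le, hlen, ?_⟩
  calc ∑ t ∈ M.sample SP MD, t.1.length
      ≤ (M.sample SP MD).card * (Fintype.card Q + 1 + Fintype.card Q ^ 2) :=
        Finset.sum_le_card_nsmul _ _ _ hlen
    _ ≤ _ := Nat.mul_le_mul_right _ Moore.card_sample_le

/-- Bound on the total size of a characteristic sample:
every minimal Moore machine with nonempty input alphabet admits a
characteristic sample with at most `(|Q|·|I| + 1)·(|Q| + 1)` traces in which
every input word has length at most `|Q| + 1 + |Q|²`; consequently the sum of
the lengths of its input words is at most
`(|Q|·|I| + 1)·(|Q| + 1)·(|Q| + 1 + |Q|²)`. -/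
theorem exists_small_total_characteristic_sample {I O Q : Type} [LinearOrder I]
    [Fintype I] [Fintype O] [DecidableEq O] [Fintype Q] [Nonempty I]
    (M : Moore I O Q) (hmin : M.Minimal)
    (SP : Q → List I) (hSP : M.IsShortestPrefixMap SP)
    (MD : Q → Q → List I) (hMD : M.IsMinDistSuffixMap MD) :
    ∃ S : Finset (List I × List O),
      (∀ t ∈ S, M.ConsistentTrace t) ∧
      M.CharSample SP MD ↑S ∧
      S.card ≤ (Fintype.card Q * Fintype.card I + 1) * (Fintype.card Q + 1) ∧
      (∀ t ∈ S, t.1.length ≤ Fintype.card Q + 1 + Fintype.card Q ^ 2) ∧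
      ∑ t ∈ S, t.1.length ≤
        (Fintype.card Q * Fintype.card I + 1) * (Fintype.card Q + 1) *
          (Fintype.card Q + 1 + Fintype.card Q ^ 2) :=
  exists_small_total_characteristic_sample_general M SP hSP MD hMD
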